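/- Let Y ≤ ℤ/nℤ ⋊ ⟨α⟩ have exactly two orbits O_1, O_2 on ℤ/nℤ with |O_1| ≤ |O_2| and rad(O_1) trivial, where n = p^t is a prime power. Then |O_1| = p^{t−1} and |O_2| = p^{t−1}(p−1). -/

import Mathlib

/-!
Every element of `Y` is an affine map `x ↦ u * x + b` of `ZMod n`, and `g ↦ u` is a homomorphism
`Y → (ZMod n)ˣ` whose kernel consists of the translations in `Y`. Such a translation preserves the
orbit `O₁`, so it is trivial because `rad(O₁) = 0`. Hence `|Y|`, and with it both orbit lengths,
divide `φ(p ^ t) = p ^ (t - 1) * (p - 1)`. Two positive divisors of `p ^ (t - 1) * (p - 1)` adding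
up to `p ^ t` have the same `p`-adic valuation `i`, and their `p`-free parts `d₁ ≤ d₂` divide
`p - 1` and add up to `p ^ (t - i)`. This forces `t - i = 1`, `d₁ + d₂ = p`, and then `d₂ ∣ d₁ - 1`,
i.e. `d₁ = 1`.
-/

namespace Nat

theorem eq_of_pow_mul_add_pow_mul_eq_pow {p i j t d₁ d₂ : ℕ} (hp : p.Prime) (hd₁ : ¬ p ∣ d₁)
    (hd₂ : ¬ p ∣ d₂) (h : p ^ i * d₁ + p ^ j * d₂ = p ^ t) : i = j := by
  wlog hij : i ≤ j generalizing i j d₁ d₂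
  · exact (this hd₂ hd₁ (by rwa [add_comm]) (le_of_not_ge hij)).symm
  refine hij.eq_or_lt.resolve_right fun hij ↦ hd₁ ?_
  have hd₁₀ : d₁ ≠ 0 := by rintro rfl; exact hd₁ (dvd_zero p)
  have hd₂₀ : d₂ ≠ 0 := by rintro rfl; exact hd₂ (dvd_zero p)
  have hit : i < t := by
    rw [← Nat.pow_lt_pow_iff_right hp.one_lt]
    calc p ^ i ≤ p ^ i * d₁ := Nat.le_mul_of_pos_right _ (Nat.pos_of_ne_zero hd₁₀)
      _ < p ^ t := h ▸ Nat.lt_add_of_pos_right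
          (Nat.mul_pos (pow_pos hp.pos j) (Nat.pos_of_ne_zero hd₂₀))
  have h₂ : p ^ (i + 1) ∣ p ^ j * d₂ := (pow_dvd_pow p hij).mul_right d₂
  have h₁ : p ^ (i + 1) ∣ p ^ i * d₁ := (Nat.dvd_add_left h₂).1 (h ▸ pow_dvd_pow p hit)
  rw [pow_succ] at h₁
  exact Nat.dvd_of_mul_dvd_mul_left (pow_pos hp.pos i) h₁

theorem eq_of_dvd_totient_prime_pow_of_add_eq {p t m₁ m₂ : ℕ} (hp : p.Prime)
    (h₁ : m₁ ∣ (p ^ t).totient) (h₂ : m₂ ∣ (p ^ t).totient) (hsum : m₁ + m₂ = p ^ t)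
    (hpos : 0 < m₁) (hle : m₁ ≤ m₂) : m₁ = p ^ (t - 1) ∧ m₂ = p ^ (t - 1) * (p - 1) := by
  have hp2 := hp.two_le
  have ht : 0 < t := by
    by_contra! ht
    rw [Nat.le_zero.1 ht, pow_zero] at hsum
    omega
  have not_dvd_of_dvd_pred : ∀ d, d ∣ p - 1 → ¬ p ∣ d := fun d hd hpd ↦
    absurd (Nat.le_of_dvd (by omega) (hpd.trans hd)) (by omega)
  rw [totient_prime_pow hp ht] at h₁ h₂
  obtain ⟨_, d₁, hi, hd₁, rfl⟩ := Nat.dvd_mul.1 h₁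
  obtain ⟨_, d₂, hj, hd₂, rfl⟩ := Nat.dvd_mul.1 h₂
  obtain ⟨i, hi, rfl⟩ := (Nat.dvd_prime_pow hp).1 hi
  obtain ⟨j, -, rfl⟩ := (Nat.dvd_prime_pow hp).1 hj
  obtain rfl : i = j := eq_of_pow_mul_add_pow_mul_eq_pow hp
    (not_dvd_of_dvd_pred _ hd₁) (not_dvd_of_dvd_pred _ hd₂) hsum
  have hd₁_pos : 0 < d₁ := Nat.pos_of_mul_pos_left hpos
  have hd_le : d₁ ≤ d₂ := Nat.le_of_mul_le_mul_left hle (pow_pos hp.pos i)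
  have hd₂_le : d₂ ≤ p - 1 := Nat.le_of_dvd (by omega) hd₂
  have hdsum : d₁ + d₂ = p ^ (t - i) := by
    rw [← mul_add, ← pow_mul_pow_sub p (show i ≤ t by omega)] at hsum
    exact Nat.eq_of_mul_eq_mul_left (pow_pos hp.pos i) hsum
  -- `2 ≤ d₁ + d₂ ≤ 2 (p - 1) < p ^ 2`
  have hti : t - i = 1 := by
    rcases Nat.lt_or_ge (t - i) 2 with h | h
    · have : t - i ≠ 0 := fun h0 ↦ by rw [h0, pow_zero] at hdsum; omega
      omega
    · have : p * 2 ≤ p ^ (t - i) :=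
        calc p * 2 ≤ p ^ 2 := sq p ▸ Nat.mul_le_mul_left p hp2
          _ ≤ p ^ (t - i) := Nat.pow_le_pow_right hp.pos h
      omega
  rw [hti, pow_one] at hdsum
  have hd₁_one : d₁ = 1 := by
    have hdvd : d₂ ∣ (d₁ - 1) + d₂ := by rwa [show d₁ - 1 + d₂ = p - 1 by omega]
    have := Nat.eq_zero_of_dvd_of_lt ((Nat.dvd_add_left dvd_rfl).1 hdvd) (by omega)
    omega
  obtain rfl : i = t - 1 := by omega
  exact ⟨by rw [hd₁_one, mul_one], by rw [show d₂ = p - 1 by omega]⟩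

end Nat

section Affine

variable (R : Type*) [CommRing R]

def affinePerms : Subgroup (Equiv.Perm R) where
  carrier := {g | ∃ (u : Rˣ) (b : R), ∀ x, g x = u * x + b}
  one_mem' := ⟨1, 0, fun x ↦ by simp⟩
  mul_mem' := by
    rintro g h ⟨u, b, hg⟩ ⟨v, c, hh⟩
    refine ⟨u * v, u * c + b, fun x ↦ ?_⟩
    simp only [Equiv.Perm.mul_apply, hg, hh, Units.val_mul]
    ring
  inv_mem' := by
    rintro g ⟨u, b, hg⟩
    refine ⟨u⁻¹, -(u⁻¹ * b), fun x ↦ ?_⟩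
    rw [Equiv.Perm.inv_def, Equiv.symm_apply_eq, hg, mul_add, Units.mul_inv_cancel_left, mul_neg,
      Units.mul_inv_cancel_left]
    ring

variable {R}

theorem addLeft_mem_affinePerms (a : R) : Equiv.addLeft a ∈ affinePerms R :=
  ⟨1, a, fun x ↦ by simp [add_comm]⟩

namespace affinePerms

theorem apply_eq (g : affinePerms R) (x : R) : g.1 x = (g.1 1 - g.1 0) * x + g.1 0 := by
  obtain ⟨u, b, hg⟩ := g.2
  simp only [hg]
  ring

def slope : affinePerms R →* R where
  toFun g := g.1 1 - g.1 0
  map_one' := by simp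
  map_mul' g h := by
    simp only [Subgroup.coe_mul, Equiv.Perm.mul_apply, apply_eq g (h.1 _)]
    ring

theorem apply_eq_add_of_slope_eq_one {g : affinePerms R} (hg : slope g = 1) (x : R) :
    g.1 x = x + g.1 0 := by
  rw [apply_eq, show g.1 1 - g.1 0 = 1 from hg, one_mul]

end affinePerms

theorem card_dvd_card_units_of_le_affinePerms {Y : Subgroup (Equiv.Perm R)}
    (hY : Y ≤ affinePerms R) (htrans : ∀ b : R, Equiv.addRight b ∈ Y → b = 0) :
    Nat.card Y ∣ Nat.card Rˣ := by
  refine Subgroup.card_dvd_of_injective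
    ((affinePerms.slope.comp (Subgroup.inclusion hY)).toHomUnits) ?_
  rw [injective_iff_map_eq_one]
  intro y hslope
  have hy : ∀ x, y.1 x = x + y.1 0 :=
    affinePerms.apply_eq_add_of_slope_eq_one (congrArg Units.val hslope)
  have htr : y.1 = Equiv.addRight (y.1 0) := Equiv.ext hy
  have h0 : y.1 0 = 0 := htrans _ (htr ▸ y.2)
  ext x
  simp [hy x, h0]

end Affine

theorem ZMod.addAut_mem_affinePerms {n : ℕ} (α : AddAut (ZMod n)) :
    α.toEquiv ∈ affinePerms (ZMod n) := by
  refine ⟨(AddAutEquivUnits n α).toMul, 0, fun x ↦ ?_⟩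
  conv_lhs => rw [← (AddAutEquivUnits n).symm_apply_apply α]
  rw [add_zero]
  rfl

theorem Subgroup.image_orbit_of_mem {α : Type*} {Y : Subgroup (Equiv.Perm α)} {g : Equiv.Perm α}
    (hg : g ∈ Y) (a : α) : g '' MulAction.orbit Y a = MulAction.orbit Y a :=
  (Set.image_smul (a := (⟨g, hg⟩ : Y))).trans (MulAction.smul_orbit _ a)

theorem stmt_11 (n p t : ℕ) (hp : p.Prime) (hn : n = p ^ t) [NeZero n]
    (α : AddAut (ZMod n))
    (X : Subgroup (Equiv.Perm (ZMod n)))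
    (hX : X = Subgroup.closure
      ((Set.range fun a : ZMod n => Equiv.addLeft a) ∪ {α.toEquiv}))
    (Y : Subgroup (Equiv.Perm (ZMod n))) (hYX : Y ≤ X)
    (O₁ O₂ : Set (ZMod n))
    (hO₁ : ∃ a, O₁ = MulAction.orbit Y a) (hO₂ : ∃ a, O₂ = MulAction.orbit Y a)
    (hcover : O₁ ∪ O₂ = Set.univ) (hdisj : Disjoint O₁ O₂)
    (hsize : O₁.ncard ≤ O₂.ncard)
    (hrad : {u : ZMod n | (fun x => x + u) '' O₁ = O₁} = {0}) :
    O₁.ncard = p ^ (t - 1) ∧ O₂.ncard = p ^ (t - 1) * (p - 1) := by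
  obtain ⟨a₁, rfl⟩ := hO₁
  obtain ⟨a₂, rfl⟩ := hO₂
  have hXaff : X ≤ affinePerms (ZMod n) := hX ▸ (Subgroup.closure_le _).2
    (Set.union_subset (Set.range_subset_iff.2 addLeft_mem_affinePerms)
      (Set.singleton_subset_iff.2 (ZMod.addAut_mem_affinePerms α)))
  have hYcard : Nat.card Y ∣ (p ^ t).totient := by
    rw [← hn, ← ZMod.card_units_eq_totient, ← Nat.card_eq_fintype_card]
    refine card_dvd_card_units_of_le_affinePerms (hYX.trans hXaff) fun b hb ↦ ?_
    rw [← Set.mem_singleton_iff, ← hrad]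
    exact Subgroup.image_orbit_of_mem hb a₁
  have horbit_dvd : ∀ a : ZMod n, (MulAction.orbit Y a).ncard ∣ (p ^ t).totient := fun a ↦
    (MulAction.index_stabilizer Y a ▸ (MulAction.stabilizer Y a).index_dvd_card).trans hYcard
  have hsum : (MulAction.orbit Y a₁).ncard + (MulAction.orbit Y a₂).ncard = p ^ t := by
    rw [← Set.ncard_union_eq hdisj, hcover, Set.ncard_univ, Nat.card_zmod, hn]
  exact Nat.eq_of_dvd_totient_prime_pow_of_add_eq hp (horbit_dvd a₁) (horbit_dvd a₂) hsum
    ((Set.ncard_pos (Set.toFinite _)).2 ⟨a₁, MulAction.mem_orbit_self a₁⟩) hsize
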